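/- arXiv:1907.09495 — 2 statements merged into one kernel-verified Lean document; each statement's English description precedes it below -/
import Mathlib

section
/- For real symmetric k×k matrices K and M with decreasingly sorted eigenvalues (α_i) and (β_i), the minimum of ‖P K P^⊤ − M‖_F² over the finite set of k×k permutation matrices P is at least ∑_{i=1}^k (α_i − β_i)². -/
open Matrix BigOperators

/-!
A permutation matrix is orthogonal, so `P K Pᵀ = V diag(α) Vᵀ` with `V = P U_K` orthogonal and
the claim is the Hoffman–Wielandt inequality. Expanding the squared Frobenius norm through traces
gives `‖V diag(α) Vᵀ - U diag(β) Uᵀ‖² = ∑ αᵢ² - 2 ∑ᵢⱼ αᵢ βⱼ Wᵢⱼ² + ∑ βⱼ²` with `W = Vᵀ U`.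
The matrix `(Wᵢⱼ²)` is doubly stochastic, so by Birkhoff's theorem the cross term is a convex
combination of the sums `∑ αᵢ β_{σ i}`, each at most `∑ αᵢ βᵢ` by the rearrangement inequality.
-/

/-- A 0-1 matrix with exactly one 1 in each row and each column. -/
def IsPermMatrix {k : ℕ} (P : Matrix (Fin k) (Fin k) ℝ) : Prop :=
  (∀ i j, P i j = 0 ∨ P i j = 1) ∧
  (∀ i, ∃! j, P i j = 1) ∧
  (∀ j, ∃! i, P i j = 1)

namespace Matrix

variable {n R : Type*} [Fintype n] [CommRing R]

theorem dotProduct_mulVec_le_dotProduct_of_mem_doublyStochastic [DecidableEq n] {α β : n → ℝ}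
    (hαβ : Monovary α β) {S : Matrix n n ℝ} (hS : S ∈ doublyStochastic ℝ n) :
    α ⬝ᵥ (S *ᵥ β) ≤ α ⬝ᵥ β := by
  have hlin : IsLinearMap ℝ fun S : Matrix n n ℝ ↦ α ⬝ᵥ (S *ᵥ β) :=
    ⟨fun S T ↦ by rw [add_mulVec, dotProduct_add], fun c S ↦ by
      rw [smul_mulVec, dotProduct_smul]⟩
  rw [← SetLike.mem_coe, doublyStochastic_eq_convexHull_permMatrix] at hS
  refine convexHull_min ?_ (convex_halfSpace_le hlin _) hS
  rintro _ ⟨σ, rfl⟩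
  simpa [permMatrix_mulVec, dotProduct] using hαβ.sum_mul_comp_perm_le_sum_mul (σ := σ)

theorem mul_mul_transpose_eq_one [DecidableEq n] {A B : Matrix n n R}
    (hA : A * Aᵀ = 1) (hB : B * Bᵀ = 1) : A * B * (A * B)ᵀ = 1 := by
  rw [transpose_mul, Matrix.mul_assoc, ← Matrix.mul_assoc B, hB, Matrix.one_mul, hA]

theorem hadamard_self_mem_doublyStochastic [LinearOrder R] [IsStrictOrderedRing R]
    [DecidableEq n] {W : Matrix n n R} (hW : W * Wᵀ = 1) : W ⊙ W ∈ doublyStochastic R n := by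
  have hW' : Wᵀ * W = 1 := mul_eq_one_comm.mp hW
  refine mem_doublyStochastic_iff_sum.mpr
    ⟨fun i j ↦ mul_self_nonneg (W i j), fun i ↦ ?_, fun j ↦ ?_⟩
  · simpa [mul_apply] using congr_fun₂ hW i i
  · simpa [mul_apply] using congr_fun₂ hW' j j

theorem sum_sq_eq_trace_mul_transpose (X : Matrix n n R) :
    ∑ i, ∑ j, X i j ^ 2 = trace (X * Xᵀ) := by
  simp [trace, mul_apply, sq]

theorem trace_conj_mul_conj (V U X Y : Matrix n n R) :
    trace (V * X * Vᵀ * (U * Y * Uᵀ)) = trace (X * (Vᵀ * U) * Y * (Vᵀ * U)ᵀ) := by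
  rw [transpose_mul, transpose_transpose]
  simp only [Matrix.mul_assoc]
  rw [trace_mul_comm]
  simp only [Matrix.mul_assoc]

theorem trace_diagonal_mul_diagonal_mul_transpose [DecidableEq n] (α β : n → R)
    (W : Matrix n n R) :
    trace (diagonal α * W * diagonal β * Wᵀ) = α ⬝ᵥ ((W ⊙ W) *ᵥ β) := by
  simp only [trace, diag, mul_apply (M := diagonal α * W * diagonal β), mul_diagonal,
    diagonal_mul, transpose_apply, dotProduct, mulVec, hadamard_apply, Finset.mul_sum]
  exact Finset.sum_congr rfl fun i _ ↦ Finset.sum_congr rfl fun j _ ↦ by ring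

theorem trace_conj_diagonal_mul_conj_diagonal [DecidableEq n] {V U : Matrix n n R}
    (α β : n → R) :
    trace (V * diagonal α * Vᵀ * (U * diagonal β * Uᵀ)) =
      α ⬝ᵥ (((Vᵀ * U) ⊙ (Vᵀ * U)) *ᵥ β) := by
  rw [trace_conj_mul_conj, trace_diagonal_mul_diagonal_mul_transpose]

theorem sum_sq_conj_diagonal_sub_conj_diagonal [DecidableEq n] {V U : Matrix n n R}
    (hV : Vᵀ * V = 1) (hU : Uᵀ * U = 1) (α β : n → R) :
    ∑ i, ∑ j, ((V * diagonal α * Vᵀ - U * diagonal β * Uᵀ) i j) ^ 2 =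
      α ⬝ᵥ α - 2 * α ⬝ᵥ (((Vᵀ * U) ⊙ (Vᵀ * U)) *ᵥ β) + β ⬝ᵥ β := by
  have hA : (V * diagonal α * Vᵀ)ᵀ = V * diagonal α * Vᵀ := by
    simp [transpose_mul, Matrix.mul_assoc]
  have hB : (U * diagonal β * Uᵀ)ᵀ = U * diagonal β * Uᵀ := by
    simp [transpose_mul, Matrix.mul_assoc]
  rw [sum_sq_eq_trace_mul_transpose, transpose_sub, hA, hB, sub_mul, mul_sub, mul_sub,
    trace_sub, trace_sub, trace_sub, trace_mul_comm (U * _ * _)]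
  simp only [trace_conj_diagonal_mul_conj_diagonal, hV, hU, one_hadamard, diag_one, Pi.one_def,
    diagonal_one, one_mulVec]
  ring

theorem sum_sub_sq_le_sum_sq_conj_diagonal_sub_conj_diagonal [DecidableEq n]
    {V U : Matrix n n ℝ} (hV : V * Vᵀ = 1) (hU : U * Uᵀ = 1) {α β : n → ℝ}
    (hαβ : Monovary α β) :
    ∑ i, (α i - β i) ^ 2 ≤ ∑ i, ∑ j, ((V * diagonal α * Vᵀ - U * diagonal β * Uᵀ) i j) ^ 2 := by
  have hVtV : Vᵀ * V = 1 := mul_eq_one_comm.mp hV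
  have hW : Vᵀ * U * (Vᵀ * U)ᵀ = 1 :=
    mul_mul_transpose_eq_one (by rwa [transpose_transpose]) hU
  have hcross := dotProduct_mulVec_le_dotProduct_of_mem_doublyStochastic hαβ
    (hadamard_self_mem_doublyStochastic hW)
  have hexpand : ∑ i, (α i - β i) ^ 2 = α ⬝ᵥ α - 2 * α ⬝ᵥ β + β ⬝ᵥ β := by
    simp only [dotProduct, sub_sq, Finset.sum_add_distrib, Finset.sum_sub_distrib,
      Finset.mul_sum]
    simp only [sq, mul_assoc]
  rw [sum_sq_conj_diagonal_sub_conj_diagonal hVtV (mul_eq_one_comm.mp hU), hexpand]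
  linarith

end Matrix

theorem IsPermMatrix.mul_transpose_self {k : ℕ} {P : Matrix (Fin k) (Fin k) ℝ}
    (hP : IsPermMatrix P) : P * Pᵀ = 1 := by
  obtain ⟨h01, hrow, hcol⟩ := hP
  ext i l
  obtain ⟨j, hij, hj⟩ := hrow i
  rw [mul_apply, Finset.sum_eq_single j, hij, one_mul, transpose_apply, one_apply]
  · split_ifs with hil
    · exact hil ▸ hij
    · exact (h01 l j).resolve_right fun hlj ↦ hil ((hcol j).unique hij hlj)
  · intro j' _ hj'
    rw [(h01 i j').resolve_right fun h ↦ hj' (hj j' h), zero_mul]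
  · simp

theorem perm_matching_lower_bound_general {k : ℕ}
    (K M : Matrix (Fin k) (Fin k) ℝ)
    (α β : Fin k → ℝ) (hα : Antitone α) (hβ : Antitone β)
    (UK UM : Matrix (Fin k) (Fin k) ℝ)
    (hUK : UK * UKᵀ = 1) (hUM : UM * UMᵀ = 1)
    (hKdec : K = UK * Matrix.diagonal α * UKᵀ)
    (hMdec : M = UM * Matrix.diagonal β * UMᵀ) :
    ∀ P : Matrix (Fin k) (Fin k) ℝ, IsPermMatrix P →
      ∑ i, ∑ j, ((P * K * Pᵀ - M) i j) ^ 2 ≥ ∑ i, (α i - β i) ^ 2 := by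
  intro P hP
  have hPK : P * K * Pᵀ = P * UK * diagonal α * (P * UK)ᵀ := by
    simp only [hKdec, transpose_mul, Matrix.mul_assoc]
  rw [hPK, hMdec]
  exact sum_sub_sq_le_sum_sq_conj_diagonal_sub_conj_diagonal
    (mul_mul_transpose_eq_one hP.mul_transpose_self hUK) hUM (hα.monovary hβ)

/-- The spectral value `∑ i, (α i - β i)²` is a lower bound for the exact
combinatorial matching objective over permutation matrices. -/
theorem perm_matching_lower_bound {k : ℕ}
    (K M : Matrix (Fin k) (Fin k) ℝ)
    (hK : K.IsSymm) (hM : M.IsSymm)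
    (α β : Fin k → ℝ) (hα : Antitone α) (hβ : Antitone β)
    (UK UM : Matrix (Fin k) (Fin k) ℝ)
    (hUK : UK * UKᵀ = 1) (hUM : UM * UMᵀ = 1)
    (hKdec : K = UK * Matrix.diagonal α * UKᵀ)
    (hMdec : M = UM * Matrix.diagonal β * UMᵀ) :
    ∀ P : Matrix (Fin k) (Fin k) ℝ, IsPermMatrix P →
      ∑ i, ∑ j, ((P * K * Pᵀ - M) i j) ^ 2 ≥ ∑ i, (α i - β i) ^ 2 :=
  perm_matching_lower_bound_general K M α β hα hβ UK UM hUK hUM hKdec hMdec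
end

section
/- Let K and M be real symmetric k×k matrices each having k distinct eigenvalues, with eigendecompositions K = U_K Λ_K U_K^⊤ and M = U_M Λ_M U_M^⊤ (eigenvalues sorted decreasingly). If R is any orthogonal matrix achieving ‖R K R^⊤ − M‖_F² = ∑_{i=1}^k(α_i − β_i)², then R K R^⊤ and M commute. -/
open Matrix BigOperators
open Finset

lemma ds_upper_zero {k : ℕ} {α β : Fin k → ℝ} (hα : StrictAnti α) (hβ : StrictAnti β)
    {D : Fin k → Fin k → ℝ} (hD0 : ∀ i j, 0 ≤ D i j)
    (hrow : ∀ i, ∑ j, D i j = 1) (hcol : ∀ j, ∑ i, D i j = 1)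
    (heq : ∑ i, ∑ j, β i * α j * D i j = ∑ i, α i * β i) :
    ∀ a b : Fin k, a < b → D a b = 0 := by
  intro a b hab
  have hk : 0 < k := a.pos
  set last : Fin k := ⟨k - 1, by omega⟩ with hlast
  set z : Fin k → ℝ := fun i => α i - ∑ j, D i j * α j with hz
  have hztot : ∑ i, z i = 0 := by
    simp only [hz, Finset.sum_sub_distrib]
    rw [Finset.sum_comm]
    simp [← Finset.sum_mul, hcol]
  have hG : ∑ i, β i * z i = 0 := by
    have h1 : ∀ i : Fin k, β i * z i = β i * α i - ∑ j, β i * α j * D i j := by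
      intro i
      simp only [hz]
      rw [mul_sub, Finset.mul_sum]
      congr 1
      exact Finset.sum_congr rfl (fun j _ => by ring)
    simp only [h1, Finset.sum_sub_distrib, heq]
    rw [sub_eq_zero]
    exact Finset.sum_congr rfl (fun i _ => mul_comm _ _)
  set Z : Fin k → ℝ := fun m => ∑ i ∈ univ.filter (fun i => i ≤ m), z i with hZdef
  set δ : Fin k → ℝ :=
    fun m => if h : (m : ℕ) + 1 < k then β m - β ⟨(m : ℕ) + 1, h⟩ else 0 with hδ
  have hδ0 : ∀ m, 0 ≤ δ m := by
    intro m
    simp only [hδ]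
    split
    · rename_i h
      have : m < (⟨(m : ℕ) + 1, h⟩ : Fin k) := by simp [Fin.lt_def]
      linarith [hβ this]
    · exact le_refl 0
  -- partial sum lower bound
  have key : ∀ m : Fin k, ∀ hm : (m : ℕ) + 1 < k,
      (α m - α ⟨(m : ℕ) + 1, hm⟩) *
        (∑ j ∈ univ.filter (fun j => m < j), ∑ i ∈ univ.filter (fun i => i ≤ m), D i j)
        ≤ Z m := by
    intro m hm
    set m' : Fin k := ⟨(m : ℕ) + 1, hm⟩ with hm'
    set I := univ.filter (fun i : Fin k => i ≤ m) with hI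
    set J := univ.filter (fun j : Fin k => m < j) with hJ
    set c : Fin k → ℝ := fun j => ∑ i ∈ I, D i j with hc
    have hc0 : ∀ j, 0 ≤ c j := fun j => Finset.sum_nonneg fun i _ => hD0 i j
    have hc1 : ∀ j, c j ≤ 1 := by
      intro j
      have h : c j ≤ ∑ i, D i j :=
        Finset.sum_le_sum_of_subset_of_nonneg (Finset.filter_subset _ _)
          (fun i _ _ => hD0 i j)
      rw [hcol j] at h
      exact h
    have hdisj : Disjoint I J := by
      simp only [hI, hJ, Finset.disjoint_left, Finset.mem_filter, Finset.mem_univ, true_and]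
      intro j h1 h2
      exact absurd h2 (not_lt.mpr h1)
    have hIJ : I ∪ J = univ := by
      ext j
      simp only [hI, hJ, Finset.mem_union, Finset.mem_filter, Finset.mem_univ, true_and,
        iff_true]
      exact le_or_gt j m
    have hcsum : ∑ j ∈ I, c j + ∑ j ∈ J, c j = (I.card : ℝ) := by
      rw [← Finset.sum_union hdisj, hIJ]
      have : ∑ j, c j = ∑ i ∈ I, ∑ j, D i j := Finset.sum_comm
      rw [this]
      simp [hrow]
    have hs : ∑ j ∈ I, (1 - c j) = ∑ j ∈ J, c j := by
      rw [Finset.sum_sub_distrib, Finset.sum_const, nsmul_eq_mul, mul_one]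
      linarith
    have hZexp : Z m = ∑ j ∈ I, (1 - c j) * α j - ∑ j ∈ J, c j * α j := by
      simp only [hZdef, hz, Finset.sum_sub_distrib]
      rw [← hI, Finset.sum_comm]
      have h2 : ∑ j, ∑ i ∈ I, D i j * α j = ∑ j ∈ I, c j * α j + ∑ j ∈ J, c j * α j := by
        have hcj : ∀ j, ∑ i ∈ I, D i j * α j = c j * α j := by
          intro j
          simp only [hc, Finset.sum_mul]
        simp only [hcj]
        rw [← Finset.sum_union hdisj, hIJ]
      rw [h2]
      have h4 : ∑ j ∈ I, α j - ∑ j ∈ I, c j * α j = ∑ j ∈ I, (1 - c j) * α j := by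
        rw [← Finset.sum_sub_distrib]
        exact Finset.sum_congr rfl (fun j _ => by ring)
      linarith [h4]
    have hB1 : ∑ j ∈ I, (1 - c j) * α m ≤ ∑ j ∈ I, (1 - c j) * α j := by
      refine Finset.sum_le_sum (fun j hj => ?_)
      have hjm : j ≤ m := by simpa [hI] using hj
      exact mul_le_mul_of_nonneg_left (hα.antitone hjm) (by linarith [hc1 j])
    have hB2 : ∑ j ∈ J, c j * α j ≤ ∑ j ∈ J, c j * α m' := by
      refine Finset.sum_le_sum (fun j hj => ?_)
      have hjm : m < j := by simpa [hJ] using hj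
      have : m' ≤ j := by
        rw [Fin.le_def]
        have := Fin.lt_def.mp hjm
        simp only [hm']
        omega
      exact mul_le_mul_of_nonneg_left (hα.antitone this) (hc0 j)
    have hSc : ∑ j ∈ J, ∑ i ∈ I, D i j = ∑ j ∈ J, c j :=
      Finset.sum_congr rfl (fun j _ => rfl)
    rw [hZexp, hSc]
    have e1 : ∑ j ∈ I, (1 - c j) * α m = (∑ j ∈ J, c j) * α m := by
      rw [← Finset.sum_mul, hs]
    have e2 : ∑ j ∈ J, c j * α m' = (∑ j ∈ J, c j) * α m' := by
      rw [← Finset.sum_mul]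
    nlinarith [hB1, hB2, e1, e2]
  -- telescoping
  have tele : ∀ i : Fin k, ∑ m ∈ univ.filter (fun m => i ≤ m), δ m = β i - β last := by
    have aux : ∀ n : ℕ, ∀ i : Fin k, k - 1 - (i : ℕ) = n →
        ∑ m ∈ univ.filter (fun m => i ≤ m), δ m = β i - β last := by
      intro n
      induction n with
      | zero =>
        intro i hi
        have hival : (i : ℕ) = k - 1 := by omega
        have hieq : i = last := by
          apply Fin.ext; simp [hlast, hival]
        have hfilter : univ.filter (fun m : Fin k => i ≤ m) = {i} := by
          ext m
          simp only [Finset.mem_filter, Finset.mem_univ, true_and, Finset.mem_singleton]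
          constructor
          · intro h
            apply Fin.ext
            have h1 := Fin.le_def.mp h
            have h2 : (m : ℕ) < k := m.isLt
            omega
          · intro h; exact h ▸ le_refl i
        rw [hfilter, Finset.sum_singleton]
        have : ¬ ((i : ℕ) + 1 < k) := by omega
        simp only [hδ, dif_neg this]
        rw [hieq]; ring
      | succ n ih =>
        intro i hi
        have hi1 : (i : ℕ) + 1 < k := by omega
        set i' : Fin k := ⟨(i : ℕ) + 1, hi1⟩ with hi'
        have hfilter : univ.filter (fun m : Fin k => i ≤ m)
            = insert i (univ.filter (fun m : Fin k => i' ≤ m)) := by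
          ext m
          simp only [Finset.mem_filter, Finset.mem_univ, true_and, Finset.mem_insert]
          rw [Fin.le_def, Fin.le_def, Fin.ext_iff]
          simp only [hi']
          omega
        have hnot : i ∉ univ.filter (fun m : Fin k => i' ≤ m) := by
          simp only [Finset.mem_filter, Finset.mem_univ, true_and, Fin.le_def, hi']
          omega
        rw [hfilter, Finset.sum_insert hnot, ih i' (by simp [hi']; omega)]
        have : δ i = β i - β i' := by
          simp only [hδ, dif_pos hi1, hi']
        rw [this]; ring
    intro i; exact aux (k - 1 - (i : ℕ)) i rfl
  -- Abel summation
  have abel : ∑ m, δ m * Z m = ∑ i, β i * z i := by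
    have h1 : ∑ m, δ m * Z m = ∑ m, ∑ i, (if i ≤ m then δ m * z i else 0) := by
      refine Finset.sum_congr rfl (fun m _ => ?_)
      rw [hZdef, Finset.mul_sum, Finset.sum_filter]
    rw [h1, Finset.sum_comm]
    have h2 : ∀ i : Fin k, ∑ m, (if i ≤ m then δ m * z i else 0)
        = (β i - β last) * z i := by
      intro i
      rw [← Finset.sum_filter, ← Finset.sum_mul, tele i]
    rw [Finset.sum_congr rfl (fun i _ => h2 i)]
    have h3 : ∑ i, (β i - β last) * z i = ∑ i, β i * z i - β last * ∑ i, z i := by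
      rw [Finset.mul_sum, ← Finset.sum_sub_distrib]
      exact Finset.sum_congr rfl (fun i _ => by ring)
    rw [h3, hztot]; ring
  have habel0 : ∑ m, δ m * Z m = 0 := by rw [abel, hG]
  have hZnn : ∀ m : Fin k, 0 ≤ δ m * Z m := by
    intro m
    by_cases hm : (m : ℕ) + 1 < k
    · have hS0 : 0 ≤ ∑ j ∈ univ.filter (fun j => m < j),
          ∑ i ∈ univ.filter (fun i => i ≤ m), D i j :=
        Finset.sum_nonneg fun j _ => Finset.sum_nonneg fun i _ => hD0 i j
      have hαm : 0 < α m - α ⟨(m : ℕ) + 1, hm⟩ := by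
        have : m < (⟨(m : ℕ) + 1, hm⟩ : Fin k) := by simp [Fin.lt_def]
        linarith [hα this]
      have := key m hm
      exact mul_nonneg (hδ0 m) (le_trans (mul_nonneg hαm.le hS0) this)
    · simp only [hδ, dif_neg hm]; simp
  have hterm : ∀ m : Fin k, m ∈ univ → δ m * Z m = 0 := by
    intro m _
    exact (Finset.sum_eq_zero_iff_of_nonneg (fun m _ => hZnn m)).mp habel0 m (Finset.mem_univ m)
  -- apply at m = a
  have ha1 : (a : ℕ) + 1 < k := by
    have := Fin.lt_def.mp hab
    have := b.isLt
    omega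
  have hδa : 0 < δ a := by
    have : a < (⟨(a : ℕ) + 1, ha1⟩ : Fin k) := by simp [Fin.lt_def]
    simp only [hδ, dif_pos ha1]
    linarith [hβ this]
  have hZa : Z a = 0 := by
    have := hterm a (Finset.mem_univ a)
    rcases mul_eq_zero.mp this with h | h
    · exact absurd h (ne_of_gt hδa)
    · exact h
  have hαa : 0 < α a - α ⟨(a : ℕ) + 1, ha1⟩ := by
    have : a < (⟨(a : ℕ) + 1, ha1⟩ : Fin k) := by simp [Fin.lt_def]
    linarith [hα this]
  have hS0 : 0 ≤ ∑ j ∈ univ.filter (fun j => a < j),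
      ∑ i ∈ univ.filter (fun i => i ≤ a), D i j :=
    Finset.sum_nonneg fun j _ => Finset.sum_nonneg fun i _ => hD0 i j
  have hS : ∑ j ∈ univ.filter (fun j => a < j),
      ∑ i ∈ univ.filter (fun i => i ≤ a), D i j = 0 := by
    have hkey := key a ha1
    rw [hZa] at hkey
    nlinarith
  have hcolb : ∑ i ∈ univ.filter (fun i => i ≤ a), D i b = 0 := by
    have := (Finset.sum_eq_zero_iff_of_nonneg
      (fun j _ => Finset.sum_nonneg fun i _ => hD0 i j)).mp hS b
    apply this
    simp [hab]
  have := (Finset.sum_eq_zero_iff_of_nonneg (fun i _ => hD0 i b)).mp hcolb a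
  apply this
  simp [le_refl]

lemma ds_offdiag {k : ℕ} {α β : Fin k → ℝ} (hα : StrictAnti α) (hβ : StrictAnti β)
    {D : Fin k → Fin k → ℝ} (hD0 : ∀ i j, 0 ≤ D i j)
    (hrow : ∀ i, ∑ j, D i j = 1) (hcol : ∀ j, ∑ i, D i j = 1)
    (heq : ∑ i, ∑ j, β i * α j * D i j = ∑ i, α i * β i) :
    ∀ i j : Fin k, i ≠ j → D i j = 0 := by
  have htri := ds_upper_zero hα hβ hD0 hrow hcol heq
  have hdiag : ∀ n : Fin k, D n n = 1 := by
    have aux : ∀ N : ℕ, ∀ n : Fin k, (n : ℕ) = N → D n n = 1 := by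
      intro N
      induction N using Nat.strong_induction_on with
      | _ N ih =>
        intro n hn
        have hless : ∀ j : Fin k, j < n → D n j = 0 := by
          intro j hj
          have hjN : (j : ℕ) < N := by
            have := Fin.lt_def.mp hj; omega
          have hjj : D j j = 1 := ih (j : ℕ) hjN j rfl
          have hjn : j ≠ n := ne_of_lt hj
          have hpair : D j j + D n j ≤ ∑ i, D i j := by
            have h := Finset.sum_le_sum_of_subset_of_nonneg
              (Finset.subset_univ ({j, n} : Finset (Fin k))) (fun i _ _ => hD0 i j)
            rwa [Finset.sum_pair hjn] at h
          have h1 := hcol j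
          have h2 := hD0 n j
          linarith
        have hsum : ∑ j, D n j = D n n := by
          apply Finset.sum_eq_single
          · intro j _ hjn
            rcases lt_or_gt_of_ne hjn with h | h
            · exact hless j h
            · exact htri n j h
          · intro h; exact absurd (Finset.mem_univ n) h
        rw [← hsum]
        exact hrow n
    intro n; exact aux (n : ℕ) n rfl
  intro i j hij
  rcases lt_or_gt_of_ne hij with h | h
  · exact htri i j h
  · have hjj := hdiag j
    have hpair : D j j + D i j ≤ ∑ l, D l j := by
      have h' := Finset.sum_le_sum_of_subset_of_nonneg
        (Finset.subset_univ ({j, i} : Finset (Fin k))) (fun l _ _ => hD0 l j)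
      rwa [Finset.sum_pair (ne_of_lt h)] at h'
    have h1 := hcol j
    have h2 := hD0 i j
    linarith

lemma frob_trace {k : ℕ} (X : Matrix (Fin k) (Fin k) ℝ) :
    ∑ i, ∑ j, (X i j) ^ 2 = Matrix.trace (X * Xᵀ) := by
  simp [Matrix.trace, Matrix.diag, Matrix.mul_apply, sq]

lemma conj_diag_apply {k : ℕ} (P : Matrix (Fin k) (Fin k) ℝ) (α : Fin k → ℝ) (i l : Fin k) :
    (P * Matrix.diagonal α * Pᵀ) i l = ∑ j, P i j * α j * P l j := by
  simp only [Matrix.mul_apply, Matrix.diagonal_apply, Matrix.transpose_apply, ite_mul,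
    zero_mul, mul_ite, mul_zero, Finset.sum_ite_eq, Finset.sum_ite_eq', Finset.mem_univ, if_true]

/-- If `K`, `M` have simple spectra and an orthogonal `R` attains the optimal
alignment value `∑ i, (α i - β i)²`, then `R K Rᵀ` commutes with `M`. -/
theorem optimal_aligner_commutes {k : ℕ}
    (K M : Matrix (Fin k) (Fin k) ℝ)
    (hK : K.IsSymm) (hM : M.IsSymm)
    (α β : Fin k → ℝ) (hα : StrictAnti α) (hβ : StrictAnti β)
    (UK UM : Matrix (Fin k) (Fin k) ℝ)
    (hUK : UK * UKᵀ = 1) (hUM : UM * UMᵀ = 1)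
    (hKdec : K = UK * Matrix.diagonal α * UKᵀ)
    (hMdec : M = UM * Matrix.diagonal β * UMᵀ)
    (R : Matrix (Fin k) (Fin k) ℝ) (hR : R * Rᵀ = 1)
    (hopt : ∑ i, ∑ j, ((R * K * Rᵀ - M) i j) ^ 2 = ∑ i, (α i - β i) ^ 2) :
    (R * K * Rᵀ) * M = M * (R * K * Rᵀ) := by
  have hUK' : UKᵀ * UK = 1 := mul_eq_one_comm.mp hUK
  have hUM' : UMᵀ * UM = 1 := mul_eq_one_comm.mp hUM
  have hR' : Rᵀ * R = 1 := mul_eq_one_comm.mp hR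
  set P : Matrix (Fin k) (Fin k) ℝ := UMᵀ * R * UK with hPdef
  have hPPt : P * Pᵀ = 1 := by
    simp only [hPdef, Matrix.transpose_mul, Matrix.transpose_transpose, Matrix.mul_assoc]
    rw [← Matrix.mul_assoc UK UKᵀ, hUK, Matrix.one_mul, ← Matrix.mul_assoc R Rᵀ, hR,
      Matrix.one_mul, hUM']
  have hPtP : Pᵀ * P = 1 := mul_eq_one_comm.mp hPPt
  have hA : R * K * Rᵀ = UM * (P * Matrix.diagonal α * Pᵀ) * UMᵀ := by
    rw [hKdec]
    simp only [hPdef, Matrix.transpose_mul, Matrix.transpose_transpose, Matrix.mul_assoc]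
    rw [hUM, Matrix.mul_one, ← Matrix.mul_assoc UM UMᵀ, hUM, Matrix.one_mul]
  set N : Matrix (Fin k) (Fin k) ℝ := P * Matrix.diagonal α * Pᵀ - Matrix.diagonal β with hNdef
  have hAM : R * K * Rᵀ - M = UM * N * UMᵀ := by
    rw [hA, hMdec, hNdef, Matrix.mul_sub, Matrix.sub_mul]
  have hNs : Nᵀ = N := by
    simp only [hNdef, Matrix.transpose_sub, Matrix.transpose_mul, Matrix.transpose_transpose,
      Matrix.diagonal_transpose, Matrix.mul_assoc]
  have hfrob1 : ∑ i, ∑ j, ((UM * N * UMᵀ) i j) ^ 2 = Matrix.trace (N * N) := by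
    rw [frob_trace]
    have hX : (UM * N * UMᵀ) * (UM * N * UMᵀ)ᵀ = UM * (N * Nᵀ) * UMᵀ := by
      simp only [Matrix.transpose_mul, Matrix.transpose_transpose, Matrix.mul_assoc]
      rw [← Matrix.mul_assoc UMᵀ UM, hUM', Matrix.one_mul]
    rw [hX, Matrix.trace_mul_cycle, ← Matrix.mul_assoc, hUM', Matrix.one_mul, hNs]
  have t1 : Matrix.trace ((P * Matrix.diagonal α * Pᵀ) * (P * Matrix.diagonal α * Pᵀ))
      = ∑ i, α i * α i := by
    have h1 : (P * Matrix.diagonal α * Pᵀ) * (P * Matrix.diagonal α * Pᵀ)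
        = P * (Matrix.diagonal α * (Matrix.diagonal α * Pᵀ)) := by
      simp only [Matrix.mul_assoc]
      rw [← Matrix.mul_assoc Pᵀ P, hPtP, Matrix.one_mul]
    rw [h1, Matrix.trace_mul_comm]
    simp only [Matrix.mul_assoc]
    rw [hPtP, Matrix.mul_one, Matrix.diagonal_mul_diagonal, Matrix.trace_diagonal]
  have t2 : Matrix.trace (Matrix.diagonal β * Matrix.diagonal β) = ∑ i, β i * β i := by
    rw [Matrix.diagonal_mul_diagonal, Matrix.trace_diagonal]
  have t3 : Matrix.trace ((P * Matrix.diagonal α * Pᵀ) * Matrix.diagonal β)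
      = ∑ i, ∑ j, β i * α j * (P i j) ^ 2 := by
    have h1 : ∀ i : Fin k, ((P * Matrix.diagonal α * Pᵀ) * Matrix.diagonal β) i i
        = (∑ j, P i j * α j * P i j) * β i := by
      intro i
      rw [Matrix.mul_diagonal, conj_diag_apply]
    simp only [Matrix.trace, Matrix.diag, h1]
    refine Finset.sum_congr rfl fun i _ => ?_
    rw [Finset.sum_mul]
    refine Finset.sum_congr rfl fun j _ => by ring
  have hNN : Matrix.trace (N * N)
      = ∑ i, α i * α i + ∑ i, β i * β i - 2 * ∑ i, ∑ j, β i * α j * (P i j) ^ 2 := by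
    rw [hNdef]
    rw [Matrix.sub_mul, Matrix.mul_sub, Matrix.mul_sub, Matrix.trace_sub, Matrix.trace_sub,
      Matrix.trace_sub, t1, t2, t3, Matrix.trace_mul_comm (Matrix.diagonal β), t3]
    ring
  have hrhs : ∑ i, (α i - β i) ^ 2
      = ∑ i, α i * α i - 2 * ∑ i, α i * β i + ∑ i, β i * β i := by
    have h : ∀ i : Fin k, (α i - β i) ^ 2 = α i * α i - 2 * (α i * β i) + β i * β i :=
      fun i => by ring
    simp only [h, Finset.sum_add_distrib, Finset.sum_sub_distrib, ← Finset.mul_sum]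
  rw [hAM] at hopt
  rw [hfrob1, hNN, hrhs] at hopt
  have heqT : ∑ i, ∑ j, β i * α j * (P i j) ^ 2 = ∑ i, α i * β i := by linarith
  have hrowP : ∀ i, ∑ j, (P i j) ^ 2 = 1 := by
    intro i
    have h : (P * Pᵀ) i i = 1 := by rw [hPPt]; simp [Matrix.one_apply]
    simpa [Matrix.mul_apply, Matrix.transpose_apply, sq] using h
  have hcolP : ∀ j, ∑ i, (P i j) ^ 2 = 1 := by
    intro j
    have h : (Pᵀ * P) j j = 1 := by rw [hPtP]; simp [Matrix.one_apply]
    simpa [Matrix.mul_apply, Matrix.transpose_apply, sq] using h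
  have hoff := ds_offdiag hα hβ (fun i j => sq_nonneg (P i j)) hrowP hcolP heqT
  have hPoff : ∀ i j : Fin k, i ≠ j → P i j = 0 := by
    intro i j hij
    exact (pow_eq_zero_iff two_ne_zero).mp (hoff i j hij)
  have hPdiag : ∀ i : Fin k, (P i i) ^ 2 = 1 := by
    intro i
    have h := hrowP i
    rw [Finset.sum_eq_single i] at h
    · exact h
    · intro j _ hji
      rw [hPoff i j (Ne.symm hji)]
      ring
    · intro h'; exact absurd (Finset.mem_univ i) h'
  have hPDP : P * Matrix.diagonal α * Pᵀ = Matrix.diagonal α := by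
    ext i l
    rw [conj_diag_apply]
    rcases eq_or_ne i l with rfl | h
    · rw [Finset.sum_eq_single i]
      · rw [Matrix.diagonal_apply_eq]
        linear_combination α i * hPdiag i
      · intro j _ hji
        rw [hPoff i j (Ne.symm hji)]
        ring
      · intro h'; exact absurd (Finset.mem_univ i) h'
    · rw [Matrix.diagonal_apply_ne _ h]
      apply Finset.sum_eq_zero
      intro j _
      rcases eq_or_ne j i with rfl | hji
      · rw [hPoff l j (Ne.symm h)]
        ring
      · rw [hPoff i j (Ne.symm hji)]
        ring
  have hA' : R * K * Rᵀ = UM * Matrix.diagonal α * UMᵀ := by rw [hA, hPDP]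
  have hcomm : ∀ a b : Fin k → ℝ,
      (UM * Matrix.diagonal a * UMᵀ) * (UM * Matrix.diagonal b * UMᵀ)
        = UM * Matrix.diagonal (a * b) * UMᵀ := by
    intro a b
    simp only [Matrix.mul_assoc]
    rw [← Matrix.mul_assoc UMᵀ UM, hUM', Matrix.one_mul,
      ← Matrix.mul_assoc (Matrix.diagonal a) (Matrix.diagonal b),
      Matrix.diagonal_mul_diagonal]
    rfl
  rw [hA', hMdec, hcomm, hcomm, mul_comm α β]
end
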